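/- Define distributions on ℝ² × {−1,1}: P_0 puts mass 1/2 at ((1,1), +1) and mass 1/2 at ((−1,−1), −1); P_1 puts mass 1/2 at ((1,1/3), +1) and 1/2 at ((−1,−1/3), −1); P_2 puts mass 1/2 at ((1,−1/3), +1) and 1/2 at ((−1,1/3), −1). Then: (i) P_1 is a (2/3)-shift of P_0 and P_2 is a (2/3)-shift of P_1; (ii) the model θ_0 = ((0,1), 0) ∈ Θ_1 satisfies L_r(θ_0, P_0) = 0; (iii) Err(θ_0, P_2) = 1; (iv) there exists θ' ∈ Θ_1 achieving zero pseudolabeled ramp loss on the X-marginal of P_2 with pseudolabels generated by θ_0, and every such θ' ∈ Θ_1 satisfies Err(θ', P_2) = 1; (v) the model θ* = ((1,0), 0) ∈ Θ_1 satisfies L_r(θ*, P_i) = 0 for i = 0, 1, 2. -/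

import Mathlib

open MeasureTheory

noncomputable section

/-- `ℝ^d` with the Euclidean norm. -/
abbrev Euc (d : ℕ) : Type := EuclideanSpace ℝ (Fin d)

/-- The ramp loss: `r(m) = 1` for `m ≤ 0`, `1 - m` for `0 ≤ m ≤ 1`, `0` for `m ≥ 1`. -/
def ramp (m : ℝ) : ℝ := max 0 (min 1 (1 - m))

/-- `sign(t) = 1` if `t ≥ 0`, `-1` otherwise. -/
def sgn (t : ℝ) : ℝ := if 0 ≤ t then 1 else -1

/-- The linear model `M_θ(x) = ⟨w, x⟩ + b` for `θ = (w, b)`. -/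
def model {d : ℕ} (θ : Euc d × ℝ) (x : Euc d) : ℝ := (inner ℝ θ.1 x : ℝ) + θ.2

/-- Ramp loss of a linear model on a distribution over `ℝ^d × {-1,1}`. -/
def lossR {d : ℕ} (θ : Euc d × ℝ) (P : Measure (Euc d × ℝ)) : ℝ :=
  ∫ p, ramp (p.2 * model θ p.1) ∂P

/-- 0-1 error of a linear model on a distribution over `ℝ^d × {-1,1}`. -/
def errP {d : ℕ} (θ : Euc d × ℝ) (P : Measure (Euc d × ℝ)) : ℝ :=
  (P {p | sgn (model θ p.1) ≠ p.2}).toReal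

/-- Pseudolabeled ramp loss of `θ'` on the `X`-marginal of `Q`, with pseudolabels from `θ`. -/
def pseudoLossR {d : ℕ} (θ θ' : Euc d × ℝ) (Q : Measure (Euc d × ℝ)) : ℝ :=
  ∫ x, ramp (sgn (model θ x) * model θ' x) ∂(Q.map Prod.fst)

/-- `Q` is a `ρ`-shift of `P`: there are measurable maps `f₋₁, f₁`, each moving every point by
at most `ρ`, such that `Q` is the law of `(f_Y(X), Y)` for `(X, Y) ∼ P`. -/
def IsShift {d : ℕ} (P Q : Measure (Euc d × ℝ)) (ρ : ℝ) : Prop :=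
  ∃ fneg fpos : Euc d → Euc d, Measurable fneg ∧ Measurable fpos ∧
    (∀ x, ‖fneg x - x‖ ≤ ρ) ∧ (∀ x, ‖fpos x - x‖ ≤ ρ) ∧
    Q = P.map (fun p => (if p.2 = 1 then fpos p.1 else fneg p.1, p.2))

/-- The point `(a, b) ∈ ℝ²` as an element of Euclidean space. -/
def pt (a b : ℝ) : Euc 2 := (WithLp.equiv 2 (Fin 2 → ℝ)).symm ![a, b]

/-- The source distribution `P₀`. -/
def Pex (s : ℝ) : Measure (Euc 2 × ℝ) :=
  (1 / 2 : ENNReal) • Measure.dirac (pt 1 s, 1) + (1 / 2 : ENNReal) • Measure.dirac (pt (-1) (-s), -1)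

lemma integrable_dirac'' {α} [MeasurableSpace α] [MeasurableSingletonClass α] {f : α → ℝ}
    (a : α) (hf : Measurable f) : Integrable f (Measure.dirac a) := by
  refine ⟨hf.aestronglyMeasurable, ?_⟩
  simp [HasFiniteIntegral, lintegral_dirac]

lemma integral_two_diracs {α} [MeasurableSpace α] [MeasurableSingletonClass α] {f : α → ℝ}
    (a b : α) (hf : Measurable f) :
    ∫ x, f x ∂((1/2 : ENNReal) • Measure.dirac a + (1/2 : ENNReal) • Measure.dirac b)
      = (1/2) * f a + (1/2) * f b := by
  rw [integral_add_measure ((integrable_dirac'' a hf).smul_measure (by norm_num))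
      ((integrable_dirac'' b hf).smul_measure (by norm_num)),
    integral_smul_measure, integral_smul_measure, integral_dirac, integral_dirac]
  norm_num

lemma integral_Pex (s : ℝ) {f : Euc 2 × ℝ → ℝ} (hf : Measurable f) :
    ∫ p, f p ∂(Pex s) = (1/2) * f (pt 1 s, 1) + (1/2) * f (pt (-1) (-s), -1) :=
  integral_two_diracs _ _ hf

lemma Pex_apply_one (s : ℝ) (S : Set (Euc 2 × ℝ)) (h1 : (pt 1 s, (1:ℝ)) ∈ S)
    (h2 : (pt (-1) (-s), (-1:ℝ)) ∈ S) : Pex s S = 1 := by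
  simp [Pex, Measure.add_apply, Measure.smul_apply, Measure.dirac_apply,
    Set.indicator_of_mem, h1, h2]
  rw [ENNReal.inv_two_add_inv_two]

lemma ramp_eq_zero_iff {m : ℝ} : ramp m = 0 ↔ 1 ≤ m := by
  unfold ramp
  constructor
  · intro h
    by_contra hm
    push_neg at hm
    have : 0 < min 1 (1 - m) := lt_min one_pos (by linarith)
    simp [max_eq_right this.le] at h
    linarith
  · intro h
    have : min 1 (1 - m) ≤ 0 := le_trans (min_le_right _ _) (by linarith)
    exact max_eq_left this

lemma ramp_nonneg (m : ℝ) : 0 ≤ ramp m := le_max_left _ _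

lemma ramp_measurable : Measurable ramp := by
  unfold ramp; fun_prop

lemma inner_pt (w : Euc 2) (x y : ℝ) : (inner ℝ w (pt x y) : ℝ) = w 0 * x + w 1 * y := by
  simp [pt, PiLp.inner_apply, Fin.sum_univ_two, RCLike.inner_apply]
  ring

lemma model_pt {θ : Euc 2 × ℝ} (x y : ℝ) : model θ (pt x y) = θ.1 0 * x + θ.1 1 * y + θ.2 := by
  rw [model, inner_pt]

lemma pt_apply0 (a b : ℝ) : pt a b 0 = a := rfl
lemma pt_apply1 (a b : ℝ) : pt a b 1 = b := rfl

lemma pt_sub (a b c d : ℝ) : pt a b - pt c d = pt (a-c) (b-d) := by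
  apply PiLp.ext; intro i; fin_cases i <;> rfl
lemma pt_add (a b c d : ℝ) : pt a b + pt c d = pt (a+c) (b+d) := by
  apply PiLp.ext; intro i; fin_cases i <;> rfl

lemma norm_pt (a b : ℝ) : ‖pt a b‖ = Real.sqrt (a^2 + b^2) := by
  simp [pt, EuclideanSpace.norm_eq, Fin.sum_univ_two, sq]

lemma model_measurable {d : ℕ} (θ : Euc d × ℝ) : Measurable (model θ) := by
  exact ((continuous_const.inner continuous_id).add continuous_const).measurable

lemma sgn_measurable : Measurable sgn := by
  unfold sgn
  exact Measurable.ite measurableSet_Ici measurable_const measurable_const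

lemma shift_Pex (s : ℝ) : IsShift (Pex s) (Pex (s - 2/3)) (2/3) := by
  refine ⟨fun x => x + pt 0 (2/3), fun x => x - pt 0 (2/3),
    (measurable_id.add_const _), (measurable_id.sub_const _), ?_, ?_, ?_⟩
  · intro x
    rw [add_sub_cancel_left, norm_pt]
    rw [show (0:ℝ)^2 + (2/3)^2 = (2/3)^2 by ring, Real.sqrt_sq (by norm_num)]
  · intro x
    rw [sub_sub_cancel_left, norm_neg, norm_pt]
    rw [show (0:ℝ)^2 + (2/3)^2 = (2/3)^2 by ring, Real.sqrt_sq (by norm_num)]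
  · have hg : Measurable (fun p : Euc 2 × ℝ =>
        ((if p.2 = 1 then p.1 - pt 0 (2/3) else p.1 + pt 0 (2/3)), p.2)) := by
      refine Measurable.prodMk (Measurable.ite ?_ (measurable_fst.sub_const _)
        (measurable_fst.add_const _)) measurable_snd
      exact measurable_snd (measurableSet_singleton (1:ℝ))
    simp only []
    rw [Pex, Pex, Measure.map_add _ _ hg, Measure.map_smul, Measure.map_smul,
      Measure.map_dirac' hg, Measure.map_dirac' hg]
    simp only [if_pos rfl, if_neg (by norm_num : (-1:ℝ) ≠ 1), pt_sub, pt_add]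
    norm_num
    ring_nf

lemma map_fst_Pex (s : ℝ) : (Pex s).map Prod.fst
    = (1/2 : ENNReal) • Measure.dirac (pt 1 s) + (1/2 : ENNReal) • Measure.dirac (pt (-1) (-s)) := by
  rw [Pex, Measure.map_add _ _ measurable_fst, Measure.map_smul, Measure.map_smul,
    Measure.map_dirac' measurable_fst, Measure.map_dirac' measurable_fst]

lemma lossR_measurable_fn {d : ℕ} (θ : Euc d × ℝ) :
    Measurable (fun p : Euc d × ℝ => ramp (p.2 * model θ p.1)) :=
  ramp_measurable.comp (measurable_snd.mul ((model_measurable θ).comp measurable_fst))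

lemma pseudo_fn_measurable (θ θ' : Euc 2 × ℝ) :
    Measurable (fun x : Euc 2 => ramp (sgn (model θ x) * model θ' x)) :=
  ramp_measurable.comp ((sgn_measurable.comp (model_measurable θ)).mul (model_measurable θ'))


/-- Example: direct adaptation to the target and non-adaptive baselines fail. The distributions
`P₀, P₁, P₂` are 2/3-shifts of one another, the source classifier `θ₀ = ((0,1),0)` has zero ramp
loss on `P₀` but errs on all of `P₂`; self-training directly on `P₂` keeps error 1; yet
`θ* = ((1,0),0)` has zero loss on all three distributions. -/
theorem stmt5 :
    (IsShift (Pex 1) (Pex (1 / 3)) (2 / 3) ∧ IsShift (Pex (1 / 3)) (Pex (-(1 / 3))) (2 / 3)) ∧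
    (‖(pt 0 1, (0 : ℝ)).1‖ ≤ 1 ∧ lossR (pt 0 1, (0 : ℝ)) (Pex 1) = 0) ∧
    (errP (pt 0 1, (0 : ℝ)) (Pex (-(1 / 3))) = 1) ∧
    ((∃ θ' : Euc 2 × ℝ, ‖θ'.1‖ ≤ 1 ∧ pseudoLossR (pt 0 1, (0 : ℝ)) θ' (Pex (-(1 / 3))) = 0) ∧
      (∀ θ' : Euc 2 × ℝ, ‖θ'.1‖ ≤ 1 → pseudoLossR (pt 0 1, (0 : ℝ)) θ' (Pex (-(1 / 3))) = 0 →
        errP θ' (Pex (-(1 / 3))) = 1)) ∧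
    (‖(pt 1 0, (0 : ℝ)).1‖ ≤ 1 ∧ lossR (pt 1 0, (0 : ℝ)) (Pex 1) = 0 ∧
      lossR (pt 1 0, (0 : ℝ)) (Pex (1 / 3)) = 0 ∧ lossR (pt 1 0, (0 : ℝ)) (Pex (-(1 / 3))) = 0) := by
  have hshift1 : IsShift (Pex 1) (Pex (1 / 3)) (2 / 3) := by
    have h := shift_Pex 1
    norm_num at h
    exact h
  have hshift2 : IsShift (Pex (1 / 3)) (Pex (-(1 / 3))) (2 / 3) := by
    have h := shift_Pex (1/3)
    norm_num at h
    exact h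
  have hsqrt1 : Real.sqrt 1 = 1 := Real.sqrt_one
  refine ⟨⟨hshift1, hshift2⟩, ⟨?_, ?_⟩, ?_, ⟨?_, ?_⟩, ?_, ?_, ?_, ?_⟩
  · rw [norm_pt]; norm_num
  · rw [lossR, integral_Pex 1 (lossR_measurable_fn _)]
    norm_num [model_pt, pt_apply0, pt_apply1, ramp]
  · rw [errP, Pex_apply_one, ENNReal.toReal_one]
    · simp only [Set.mem_setOf_eq, model_pt, pt_apply0, pt_apply1, sgn]
      norm_num
    · simp only [Set.mem_setOf_eq, model_pt, pt_apply0, pt_apply1, sgn]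
      norm_num
  · refine ⟨(pt (-19/20) (31/100), 0), ?_, ?_⟩
    · rw [norm_pt]
      rw [show ((-19/20:ℝ))^2 + (31/100)^2 = 9986/10000 by norm_num]
      rw [show (1:ℝ) = Real.sqrt 1 from hsqrt1.symm]
      exact Real.sqrt_le_sqrt (by norm_num)
    · rw [pseudoLossR, map_fst_Pex, integral_two_diracs _ _ (pseudo_fn_measurable _ _)]
      have e1 : ramp (sgn (model (pt 0 1, (0:ℝ)) (pt 1 (-(1/3)))) *
          model (pt (-19/20) (31/100), (0:ℝ)) (pt 1 (-(1/3)))) = 0 := by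
        rw [ramp_eq_zero_iff]
        simp only [model_pt, pt_apply0, pt_apply1, sgn]
        norm_num
      have e2 : ramp (sgn (model (pt 0 1, (0:ℝ)) (pt (-1) (-(-(1/3))))) *
          model (pt (-19/20) (31/100), (0:ℝ)) (pt (-1) (-(-(1/3))))) = 0 := by
        rw [ramp_eq_zero_iff]
        simp only [model_pt, pt_apply0, pt_apply1, sgn]
        norm_num
      rw [e1, e2]
      ring
  · intro θ' _ hzero
    rw [pseudoLossR, map_fst_Pex, integral_two_diracs _ _ (pseudo_fn_measurable _ _)] at hzero
    have hn1 := ramp_nonneg (sgn (model (pt 0 1, (0:ℝ)) (pt 1 (-(1/3)))) * model θ' (pt 1 (-(1/3))))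
    have hn2 := ramp_nonneg (sgn (model (pt 0 1, (0:ℝ)) (pt (-1) (-(-(1/3))))) *
      model θ' (pt (-1) (-(-(1/3)))))
    have h1 : ramp (sgn (model (pt 0 1, (0:ℝ)) (pt 1 (-(1/3)))) * model θ' (pt 1 (-(1/3)))) = 0 := by
      linarith
    have h2 : ramp (sgn (model (pt 0 1, (0:ℝ)) (pt (-1) (-(-(1/3))))) *
        model θ' (pt (-1) (-(-(1/3))))) = 0 := by
      linarith
    rw [ramp_eq_zero_iff] at h1 h2
    have hs1 : sgn (model (pt 0 1, (0:ℝ)) (pt 1 (-(1/3)))) = -1 := by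
      simp only [model_pt, pt_apply0, pt_apply1, sgn]
      norm_num
    have hs2 : sgn (model (pt 0 1, (0:ℝ)) (pt (-1) (-(-(1/3))))) = 1 := by
      simp only [model_pt, pt_apply0, pt_apply1, sgn]
      norm_num
    rw [hs1] at h1
    rw [hs2, one_mul] at h2
    have hm1 : model θ' (pt 1 (-(1/3))) < 0 := by nlinarith
    have hm2 : 0 ≤ model θ' (pt (-1) (-(-(1/3)))) := by linarith
    rw [errP, Pex_apply_one, ENNReal.toReal_one]
    · simp only [Set.mem_setOf_eq, sgn, if_neg (not_le.mpr hm1)]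
      norm_num
    · simp only [Set.mem_setOf_eq, sgn, if_pos hm2]
      norm_num
  · rw [norm_pt]; norm_num
  · rw [lossR, integral_Pex 1 (lossR_measurable_fn _)]
    norm_num [model_pt, pt_apply0, pt_apply1, ramp]
  · rw [lossR, integral_Pex (1/3) (lossR_measurable_fn _)]
    norm_num [model_pt, pt_apply0, pt_apply1, ramp]
  · rw [lossR, integral_Pex (-(1/3)) (lossR_measurable_fn _)]
    norm_num [model_pt, pt_apply0, pt_apply1, ramp]
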